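/- arXiv:1212.5804 — 3 statements merged into one kernel-verified Lean document; each statement's English description precedes it below -/
import Mathlib

section
/- Let H be a real Hilbert space, let ω > η > 0, and let F : H → H satisfy F(0) = 0 and the quasi-dissipativity condition ⟨F(x) − F(y), x − y⟩ ≤ η‖x − y‖² for all x, y ∈ H. Let φ : [0,∞) → H be differentiable and a : [0,∞) → H be such that φ′(t) = a(t) + F(φ(t)) and ⟨a(t), φ(t)⟩ ≤ −ω‖φ(t)‖² for all t ≥ 0. Then ‖φ(t)‖² ≤ e^{−2(ω−η)t}‖φ(0)‖² for all t ≥ 0. -/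
/-!
Since `F 0 = 0`, quasi-dissipativity gives `⟪F x, x⟫ ≤ η ‖x‖²`, so
`d/dt ‖φ t‖² = 2 ⟪φ t, a t + F (φ t)⟫ ≤ -2 (ω - η) ‖φ t‖²`, and Grönwall's inequality
yields the exponential decay.
-/

open scoped InnerProductSpace

open Real Set

theorem le_exp_mul_of_hasDerivAt_le_mul {f f' : ℝ → ℝ} {K : ℝ}
    (hf : ∀ t ≥ (0:ℝ), HasDerivAt f (f' t) t) (bound : ∀ t ≥ (0:ℝ), f' t ≤ K * f t) :
    ∀ t ≥ (0:ℝ), f t ≤ exp (K * t) * f 0 := by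
  intro t ht
  have hcont : ContinuousOn f (Icc 0 t) := fun s hs => (hf s hs.1).continuousAt.continuousWithinAt
  have h := le_gronwallBound_of_liminf_deriv_right_le hcont
    (fun s hs _ hr => (hf s hs.1).hasDerivWithinAt.liminf_right_slope_le hr) le_rfl
    (K := K) (ε := 0) (fun s hs => by rw [add_zero]; exact bound s hs.1) t ⟨ht, le_rfl⟩
  rwa [gronwallBound_ε0, sub_zero, mul_comm] at h

theorem inner_apply_self_le_of_inner_sub_le {H : Type*} [NormedAddCommGroup H]
    [InnerProductSpace ℝ H] {F : H → H} {η : ℝ} (hF0 : F 0 = 0)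
    (hF : ∀ x y : H, ⟪F x - F y, x - y⟫_ℝ ≤ η * ‖x - y‖ ^ 2) (x : H) :
    ⟪F x, x⟫_ℝ ≤ η * ‖x‖ ^ 2 := by
  simpa [hF0] using hF x 0

theorem deterministic_decay_estimate_general
    {H : Type*} [NormedAddCommGroup H] [InnerProductSpace ℝ H]
    (ω η : ℝ)
    (F : H → H) (hF0 : F 0 = 0)
    (hF : ∀ x y : H, ⟪F x - F y, x - y⟫_ℝ ≤ η * ‖x - y‖ ^ 2)
    (φ a : ℝ → H)
    (hφ : ∀ t ≥ (0:ℝ), HasDerivAt φ (a t + F (φ t)) t)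
    (ha : ∀ t ≥ (0:ℝ), ⟪a t, φ t⟫_ℝ ≤ -ω * ‖φ t‖ ^ 2) :
    ∀ t ≥ (0:ℝ), ‖φ t‖ ^ 2 ≤ Real.exp (-2 * (ω - η) * t) * ‖φ 0‖ ^ 2 := by
  refine le_exp_mul_of_hasDerivAt_le_mul (fun t ht => (hφ t ht).norm_sq) fun t ht => ?_
  have hFφ := inner_apply_self_le_of_inner_sub_le hF0 hF (φ t)
  rw [inner_add_right, real_inner_comm (a t), real_inner_comm (F _)]
  linarith [ha t ht]

theorem deterministic_decay_estimate
    {H : Type*} [NormedAddCommGroup H] [InnerProductSpace ℝ H]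
    (ω η : ℝ) (hη : 0 < η) (hωη : η < ω)
    (F : H → H) (hF0 : F 0 = 0)
    (hF : ∀ x y : H, ⟪F x - F y, x - y⟫_ℝ ≤ η * ‖x - y‖ ^ 2)
    (φ a : ℝ → H)
    (hφ : ∀ t ≥ (0:ℝ), HasDerivAt φ (a t + F (φ t)) t)
    (ha : ∀ t ≥ (0:ℝ), ⟪a t, φ t⟫_ℝ ≤ -ω * ‖φ t‖ ^ 2) :
    ∀ t ≥ (0:ℝ), ‖φ t‖ ^ 2 ≤ Real.exp (-2 * (ω - η) * t) * ‖φ 0‖ ^ 2 :=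
  deterministic_decay_estimate_general ω η F hF0 hF φ a hφ ha
end

section
/- Let H be a real Hilbert space, ω > γ̄ ≥ 0, T > 0, and let u : [0,T] → H be differentiable, with continuous maps a, b, Φ : [0,T] → H such that u′(t) = a(t) + b(t) + Φ(t), ⟨a(t), u(t)⟩ ≤ −ω‖u(t)‖², and ‖b(t)‖ ≤ γ̄‖u(t)‖ for all t ∈ [0,T]. Then for every integer a ≥ 1 and every δ ∈ (0, ω − γ̄) there exists a constant C > 0 (depending only on a, δ, ω, γ̄) such that for all t ∈ [0,T]: ‖u(t)‖^{2a} ≤ e^{−2a(ω−γ̄−δ)t}‖u(0)‖^{2a} + C ∫₀ᵗ e^{−2a(ω−γ̄−δ)(t−s)} ‖Φ(s)‖^{2a} ds; in particular sup_{t∈[0,T]} ‖u(t)‖^{2a} ≤ ‖u(0)‖^{2a} + (C/(2a(ω−γ̄−δ))) sup_{s∈[0,T]} ‖Φ(s)‖^{2a}. -/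
open scoped InnerProductSpace

open MeasureTheory Set Real

/-!
Writing `g = ‖u‖^(2a)`, the chain rule gives `g' = 2a ‖u‖^(2a-2) ⟪u', u⟫`, and the hypotheses bound
`⟪u', u⟫ ≤ -(ω - γ)‖u‖² + ‖Φ‖‖u‖`. Young's inequality `X^(2a-1) Y ≤ δ X^(2a) + Y^(2a) / δ^(2a-1)`
absorbs the cross term, leaving the linear differential inequality
`g' ≤ -2a(ω - γ - δ) g + (2a / δ^(2a-1)) ‖Φ‖^(2a)`. Comparing with the variation-of-constants
formula (i.e. `e^(κt) g(t) - ∫₀ᵗ e^(κs) f(s) ds` is antitone) gives the pointwise bound, and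
`∫₀ᵗ e^(-κ(t-s)) ds ≤ 1/κ` gives the bound on the supremum.
-/

theorem pow_mul_le_mul_pow_succ_add_div {X Y δ : ℝ} (hX : 0 ≤ X) (hY : 0 ≤ Y) (hδ : 0 < δ)
    (n : ℕ) : X ^ n * Y ≤ δ * X ^ (n + 1) + Y ^ (n + 1) / δ ^ n := by
  rcases le_or_gt Y (δ * X) with hYX | hXY
  · have : X ^ n * Y ≤ δ * X ^ (n + 1) :=
      calc X ^ n * Y ≤ X ^ n * (δ * X) := by gcongr
        _ = δ * X ^ (n + 1) := by ring
    have : 0 ≤ Y ^ (n + 1) / δ ^ n := by positivity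
    linarith
  · have hXY : X ≤ Y / δ := by rw [le_div_iff₀ hδ]; linarith
    have : X ^ n * Y ≤ Y ^ (n + 1) / δ ^ n :=
      calc X ^ n * Y ≤ (Y / δ) ^ n * Y := by gcongr
        _ = Y ^ (n + 1) / δ ^ n := by rw [div_pow]; field_simp; ring
    have : 0 ≤ δ * X ^ (n + 1) := by positivity
    linarith

theorem two_mul_pow_mul_le_of_le_neg_mul_sq_add {κ δ X Y I : ℝ} {a : ℕ} (ha : 1 ≤ a)
    (hX : 0 ≤ X) (hY : 0 ≤ Y) (hδ : 0 < δ) (hI : I ≤ -κ * X ^ 2 + Y * X) :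
    2 * a * X ^ (2 * a - 2) * I ≤
      -(2 * a * (κ - δ)) * X ^ (2 * a) + 2 * a / δ ^ (2 * a - 1) * Y ^ (2 * a) := by
  obtain ⟨n, rfl⟩ : ∃ n, a = n + 1 := ⟨a - 1, by omega⟩
  have hyoung := pow_mul_le_mul_pow_succ_add_div hX hY hδ (2 * n + 1)
  rw [show 2 * (n + 1) - 2 = 2 * n by omega, show 2 * (n + 1) - 1 = 2 * n + 1 by omega,
    show 2 * (n + 1) = 2 * n + 1 + 1 by omega]
  have hc : (0 : ℝ) ≤ 2 * (n + 1 : ℕ) * X ^ (2 * n) := by positivity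
  calc 2 * (n + 1 : ℕ) * X ^ (2 * n) * I
      ≤ 2 * (n + 1 : ℕ) * X ^ (2 * n) * (-κ * X ^ 2 + Y * X) := by gcongr
    _ = 2 * (n + 1 : ℕ) * (-κ * X ^ (2 * n + 1 + 1) + X ^ (2 * n + 1) * Y) := by ring
    _ ≤ 2 * (n + 1 : ℕ) * (-κ * X ^ (2 * n + 1 + 1) +
          (δ * X ^ (2 * n + 1 + 1) + Y ^ (2 * n + 1 + 1) / δ ^ (2 * n + 1))) := by gcongr
    _ = _ := by ring

theorem le_exp_neg_mul_add_integral_of_hasDerivAt_le {g g' f : ℝ → ℝ} {κ T : ℝ}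
    (hg : ContinuousOn g (Icc 0 T)) (hf : ContinuousOn f (Icc 0 T))
    (hderiv : ∀ t ∈ Ioo 0 T, HasDerivAt g (g' t) t)
    (hle : ∀ t ∈ Ioo 0 T, g' t ≤ -κ * g t + f t) :
    ∀ t ∈ Icc 0 T, g t ≤ exp (-κ * t) * g 0 + ∫ s in 0..t, exp (-κ * (t - s)) * f s := by
  intro t ht
  set F : ℝ → ℝ := fun t ↦ ∫ s in 0..t, exp (κ * s) * f s
  have hef : ContinuousOn (fun s ↦ exp (κ * s) * f s) (Icc 0 T) := by fun_prop
  have hF : ∀ t ∈ Ioo 0 T, HasDerivAt F (exp (κ * t) * f t) t := fun t ht ↦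
    intervalIntegral.integral_hasDerivAt_right
      ((hef.mono (Icc_subset_Icc_right ht.2.le)).intervalIntegrable_of_Icc ht.1.le)
      ((hef.mono Ioo_subset_Icc_self).stronglyMeasurableAtFilter isOpen_Ioo t ht)
      (hef.continuousAt (Icc_mem_nhds ht.1 ht.2))
  have hanti : AntitoneOn (fun t ↦ exp (κ * t) * g t - F t) (Icc 0 T) := by
    have hT : 0 ≤ T := ht.1.trans ht.2
    refine antitoneOn_of_hasDerivWithinAt_nonpos (convex_Icc 0 T)
      (f' := fun t ↦ exp (κ * t) * (κ * g t + g' t - f t)) ?_ ?_ ?_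
    · have := intervalIntegral.continuousOn_primitive_interval'
        (hef.intervalIntegrable_of_Icc (μ := volume) hT) left_mem_uIcc
      rw [uIcc_of_le hT] at this
      exact (by fun_prop : ContinuousOn (fun t ↦ exp (κ * t)) _).mul hg |>.sub this
    · intro t ht
      rw [interior_Icc] at ht
      refine HasDerivAt.hasDerivWithinAt ?_
      refine ((((hasDerivAt_id' t).const_mul κ).exp.fun_mul (hderiv t ht)).fun_sub
        (hF t ht)).congr_deriv ?_
      ring
    · intro t ht
      rw [interior_Icc] at ht
      exact mul_nonpos_of_nonneg_of_nonpos (exp_pos _).le (by linarith [hle t ht])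
  have hmono := hanti (left_mem_Icc.2 (ht.1.trans ht.2)) ht ht.1
  simp only [mul_zero, exp_zero, one_mul, F, intervalIntegral.integral_same, sub_zero] at hmono
  have hconv : ∫ s in 0..t, exp (-κ * (t - s)) * f s = exp (-κ * t) * F t := by
    rw [← intervalIntegral.integral_const_mul]
    congr 1 with s
    rw [← mul_assoc, ← exp_add]; ring_nf
  calc g t = exp (-κ * t) * (exp (κ * t) * g t) := by
        rw [← mul_assoc, ← exp_add, neg_mul, neg_add_cancel, exp_zero, one_mul]
    _ ≤ exp (-κ * t) * (g 0 + F t) := by gcongr; linarith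
    _ = _ := by rw [hconv, mul_add]

theorem integral_exp_neg_mul_sub_mul_le {f : ℝ → ℝ} {κ t M : ℝ} (hκ : 0 < κ) (ht : 0 ≤ t)
    (hM : 0 ≤ M) (hf : IntervalIntegrable f volume 0 t) (hfM : ∀ s ∈ Icc 0 t, f s ≤ M) :
    ∫ s in 0..t, exp (-κ * (t - s)) * f s ≤ M / κ := by
  have hprim : ∀ s ∈ uIcc 0 t,
      HasDerivAt (fun s ↦ exp (-κ * (t - s)) / κ * M) (exp (-κ * (t - s)) * M) s := by
    intro s _
    refine ((((hasDerivAt_id' s).const_sub t).const_mul (-κ)).exp.div_const κ).mul_const M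
      |>.congr_deriv ?_
    field_simp
  calc ∫ s in 0..t, exp (-κ * (t - s)) * f s ≤ ∫ s in 0..t, exp (-κ * (t - s)) * M := by
        refine intervalIntegral.integral_mono_on ht (hf.continuousOn_mul (by fun_prop))
          (Continuous.intervalIntegrable (by fun_prop) _ _) fun s hs ↦ ?_
        exact mul_le_mul_of_nonneg_left (hfM s hs) (exp_pos _).le
    _ = (1 - exp (-κ * t)) / κ * M := by
        rw [intervalIntegral.integral_eq_sub_of_hasDerivAt hprim
          (Continuous.intervalIntegrable (by fun_prop) _ _)]
        simp only [sub_self, mul_zero, exp_zero, sub_zero]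
        ring
    _ ≤ M / κ := by
        rw [div_mul_eq_mul_div, div_le_div_iff_of_pos_right hκ]
        nlinarith [exp_pos (-κ * t)]

theorem IsCompact.le_biSup_of_continuousOn {α β : Type*} [TopologicalSpace α]
    [ConditionallyCompleteLinearOrder β] [TopologicalSpace β] [ClosedIciTopology β]
    {s : Set α} (hs : IsCompact s) {f : α → β} (hf : ContinuousOn f s) {x : α} (hx : x ∈ s) :
    f x ≤ ⨆ y ∈ s, f y :=
  le_ciSup₂ (f := fun y (_ : y ∈ s) ↦ f y) ((hs.bddAbove_image hf).mono <| by
    rintro _ ⟨_, ⟨y, rfl⟩, ⟨hy, rfl⟩⟩; exact ⟨y, hy, rfl⟩) x hx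

theorem biSup_le_add_div_mul_biSup_of_le_exp_neg_mul_add_integral {g φ : ℝ → ℝ} {κ C T : ℝ}
    (hκ : 0 < κ) (hC : 0 ≤ C) (hg₀ : 0 ≤ g 0) (hφ : ContinuousOn φ (Icc 0 T))
    (hφ₀ : ∀ s, 0 ≤ φ s)
    (hle : ∀ t ∈ Icc 0 T, g t ≤ exp (-κ * t) * g 0 + C * ∫ s in 0..t, exp (-κ * (t - s)) * φ s) :
    ⨆ t ∈ Icc 0 T, g t ≤ g 0 + C / κ * ⨆ s ∈ Icc 0 T, φ s := by
  set M := ⨆ s ∈ Icc 0 T, φ s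
  have hM : 0 ≤ M := Real.iSup_nonneg fun s ↦ Real.iSup_nonneg fun _ ↦ hφ₀ s
  have hR : 0 ≤ g 0 + C / κ * M := by positivity
  refine Real.iSup_le (fun t ↦ Real.iSup_le (fun ht ↦ ?_) hR) hR
  have hint := integral_exp_neg_mul_sub_mul_le hκ ht.1 hM
    ((hφ.mono (Icc_subset_Icc_right ht.2)).intervalIntegrable_of_Icc ht.1)
    (fun s hs ↦ isCompact_Icc.le_biSup_of_continuousOn hφ ⟨hs.1, hs.2.trans ht.2⟩)
  have hexp : exp (-κ * t) ≤ 1 := exp_le_one_iff.2 (by nlinarith [ht.1])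
  calc g t ≤ exp (-κ * t) * g 0 + C * ∫ s in 0..t, exp (-κ * (t - s)) * φ s := hle t ht
    _ ≤ g 0 + C * (M / κ) := by
        gcongr
        exact mul_le_of_le_one_left hg₀ hexp
    _ = g 0 + C / κ * M := by ring

section InnerProductSpace

variable {H : Type*} [NormedAddCommGroup H] [InnerProductSpace ℝ H]

theorem HasDerivAt.norm_pow_two_mul {u : ℝ → H} {u' : H} {t : ℝ} (hu : HasDerivAt u u' t)
    (a : ℕ) :
    HasDerivAt (fun s ↦ ‖u s‖ ^ (2 * a)) (2 * a * ‖u t‖ ^ (2 * a - 2) * ⟪u', u t⟫_ℝ) t := by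
  have h := hu.norm_sq.fun_pow a
  simp only [← pow_mul] at h
  refine h.congr_deriv ?_
  rw [real_inner_comm, show 2 * a - 2 = 2 * (a - 1) by omega, pow_mul]
  ring

theorem inner_add_add_le {x y z w : H} {ω γ : ℝ} (hx : ⟪x, w⟫_ℝ ≤ -ω * ‖w‖ ^ 2)
    (hy : ‖y‖ ≤ γ * ‖w‖) : ⟪x + y + z, w⟫_ℝ ≤ -(ω - γ) * ‖w‖ ^ 2 + ‖z‖ * ‖w‖ := by
  have hyw : ⟪y, w⟫_ℝ ≤ γ * ‖w‖ ^ 2 :=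
    calc ⟪y, w⟫_ℝ ≤ ‖y‖ * ‖w‖ := real_inner_le_norm y w
      _ ≤ γ * ‖w‖ * ‖w‖ := by gcongr
      _ = γ * ‖w‖ ^ 2 := by ring
  rw [inner_add_left, inner_add_left]
  linarith [real_inner_le_norm z w]

end InnerProductSpace

theorem higher_order_term_differential_inequality_general
    {H : Type*} [NormedAddCommGroup H] [InnerProductSpace ℝ H]
    (ω γ : ℝ)
    (T : ℝ)
    (u adrift b Φ : ℝ → H)
    (hΦc : ContinuousOn Φ (Set.Icc (0:ℝ) T))
    (hderiv : ∀ t ∈ Set.Icc (0:ℝ) T, HasDerivAt u (adrift t + b t + Φ t) t)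
    (ha : ∀ t ∈ Set.Icc (0:ℝ) T, ⟪adrift t, u t⟫_ℝ ≤ -ω * ‖u t‖ ^ 2)
    (hb : ∀ t ∈ Set.Icc (0:ℝ) T, ‖b t‖ ≤ γ * ‖u t‖) :
    ∀ a : ℕ, 1 ≤ a → ∀ δ ∈ Set.Ioo (0:ℝ) (ω - γ), ∃ C > (0:ℝ),
      (∀ t ∈ Set.Icc (0:ℝ) T,
        ‖u t‖ ^ (2 * a) ≤
          Real.exp (-(2 * (a:ℝ)) * (ω - γ - δ) * t) * ‖u 0‖ ^ (2 * a)
          + C * ∫ s in (0:ℝ)..t,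
              Real.exp (-(2 * (a:ℝ)) * (ω - γ - δ) * (t - s)) * ‖Φ s‖ ^ (2 * a)) ∧
      (⨆ t ∈ Set.Icc (0:ℝ) T, ‖u t‖ ^ (2 * a)) ≤
        ‖u 0‖ ^ (2 * a)
          + (C / (2 * (a:ℝ) * (ω - γ - δ))) * ⨆ s ∈ Set.Icc (0:ℝ) T, ‖Φ s‖ ^ (2 * a) := by
  intro a ha1 δ ⟨hδ, hδω⟩
  set κ := 2 * (a : ℝ) * (ω - γ - δ)
  set C := 2 * (a : ℝ) / δ ^ (2 * a - 1)
  have hκ : 0 < κ := mul_pos (by positivity) (by linarith)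
  have hu : ContinuousOn u (Icc 0 T) := fun t ht ↦ (hderiv t ht).continuousAt.continuousWithinAt
  have hΦa : ContinuousOn (fun s ↦ ‖Φ s‖ ^ (2 * a)) (Icc 0 T) := hΦc.norm.pow _
  have hrate : ∀ t ∈ Ioo 0 T, 2 * a * ‖u t‖ ^ (2 * a - 2) * ⟪adrift t + b t + Φ t, u t⟫_ℝ ≤
      -κ * ‖u t‖ ^ (2 * a) + C * ‖Φ t‖ ^ (2 * a) := fun t ht ↦
    two_mul_pow_mul_le_of_le_neg_mul_sq_add ha1 (norm_nonneg _) (norm_nonneg _) hδ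
      (inner_add_add_le (ha t (Ioo_subset_Icc_self ht)) (hb t (Ioo_subset_Icc_self ht)))
  have hpointwise : ∀ t ∈ Icc 0 T, ‖u t‖ ^ (2 * a) ≤ exp (-κ * t) * ‖u 0‖ ^ (2 * a) +
      C * ∫ s in 0..t, exp (-κ * (t - s)) * ‖Φ s‖ ^ (2 * a) := by
    simpa only [mul_left_comm _ C, intervalIntegral.integral_const_mul] using
      le_exp_neg_mul_add_integral_of_hasDerivAt_le (g := fun s ↦ ‖u s‖ ^ (2 * a))
        (f := fun s ↦ C * ‖Φ s‖ ^ (2 * a)) (hu.norm.pow _) (continuousOn_const.mul hΦa)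
        (fun t ht ↦ (hderiv t (Ioo_subset_Icc_self ht)).norm_pow_two_mul a) hrate
  refine ⟨C, by positivity, fun t ht ↦ by simpa only [neg_mul] using hpointwise t ht, ?_⟩
  exact biSup_le_add_div_mul_biSup_of_le_exp_neg_mul_add_integral hκ (by positivity)
    (by positivity) hΦa (fun s ↦ by positivity) hpointwise

theorem higher_order_term_differential_inequality
    {H : Type*} [NormedAddCommGroup H] [InnerProductSpace ℝ H]
    (ω γ : ℝ) (hγ : 0 ≤ γ) (hωγ : γ < ω)
    (T : ℝ) (hT : 0 < T)
    (u adrift b Φ : ℝ → H)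
    (hac : ContinuousOn adrift (Set.Icc (0:ℝ) T))
    (hbc : ContinuousOn b (Set.Icc (0:ℝ) T))
    (hΦc : ContinuousOn Φ (Set.Icc (0:ℝ) T))
    (hderiv : ∀ t ∈ Set.Icc (0:ℝ) T, HasDerivAt u (adrift t + b t + Φ t) t)
    (ha : ∀ t ∈ Set.Icc (0:ℝ) T, ⟪adrift t, u t⟫_ℝ ≤ -ω * ‖u t‖ ^ 2)
    (hb : ∀ t ∈ Set.Icc (0:ℝ) T, ‖b t‖ ≤ γ * ‖u t‖) :
    ∀ a : ℕ, 1 ≤ a → ∀ δ ∈ Set.Ioo (0:ℝ) (ω - γ), ∃ C > (0:ℝ),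
      (∀ t ∈ Set.Icc (0:ℝ) T,
        ‖u t‖ ^ (2 * a) ≤
          Real.exp (-(2 * (a:ℝ)) * (ω - γ - δ) * t) * ‖u 0‖ ^ (2 * a)
          + C * ∫ s in (0:ℝ)..t,
              Real.exp (-(2 * (a:ℝ)) * (ω - γ - δ) * (t - s)) * ‖Φ s‖ ^ (2 * a)) ∧
      (⨆ t ∈ Set.Icc (0:ℝ) T, ‖u t‖ ^ (2 * a)) ≤
        ‖u 0‖ ^ (2 * a)
          + (C / (2 * (a:ℝ) * (ω - γ - δ))) * ⨆ s ∈ Set.Icc (0:ℝ) T, ‖Φ s‖ ^ (2 * a) :=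
  higher_order_term_differential_inequality_general ω γ T u adrift b Φ hΦc hderiv ha hb
end

section
/- Let H be a real Banach space, S : [0,∞) → L(H) a strongly continuous semigroup with ‖S(t)‖ ≤ e^{−ωt} for all t ≥ 0 (ω > 0), n ≥ 1, and F : H → H an (n+1)-times continuously Fréchet differentiable map with ‖D^{(j)}F(y)‖ ≤ γ_j for all y ∈ H and j = 1, …, n+1, where ω > γ_1. Fix T > 0, u⁰ ∈ H, M > 0, and continuous functions ℓ, φ, u, u_1, …, u_n : [0,T] → H satisfying the mild equations u(t) = S(t)u⁰ + ∫₀ᵗ S(t−s)F(u(s))ds + εℓ(t), φ(t) = S(t)u⁰ + ∫₀ᵗ S(t−s)F(φ(s))ds, u_1(t) = ∫₀ᵗ S(t−s) D^{(1)}F(φ(s))[u_1(s)] ds + ℓ(t), and u_k(t) = ∫₀ᵗ S(t−s)( D^{(1)}F(φ(s))[u_k(s)] + Φ_k(φ(s))[u_1(s),…,u_{k−1}(s)] ) ds for 2 ≤ k ≤ n, with sup_{t∈[0,T]} ‖ℓ(t)‖ ≤ M and sup_{t∈[0,T]} ‖u_k(t)‖ ≤ M for k = 1, …, n. Then there is a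 constant C > 0, depending on n, T, ω, M and γ_1, …, γ_{n+1} but not on ε, such that for all ε ∈ (0,1]: sup_{t∈[0,T]} ‖u(t) − φ(t) − Σ_{k=1}^{n} ε^k u_k(t)‖ ≤ C ε^{n+1}. -/
/-!
Write `R_ε = u_ε − φ − Σ_{k ≤ n} ε^k u_k`. A Grönwall argument on the mild equations first gives
`‖u_ε − φ‖ ≤ K ε`. Subtracting the mild equations of `u_ε`, `φ` and the `u_k`, the noise `εℓ`
cancels against the `k = 1` term and `R_ε` solves `R_ε(t) = ∫₀ᵗ S(t−s) E(s) ds` with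
`E = F(u_ε) − F(φ) − Σ_k ε^k (DF(φ)[u_k] + Φ_k(φ)[u_1,…])`. Expanding `F(u_ε) = F(φ + δ)` by
Taylor's formula to order `n` and then `δ = Σ_k ε^k u_k + R_ε` multilinearly, the terms of total
degree `k ≤ n` in `ε` reproduce exactly the forcing terms of the `u_k`; what remains is the Taylor
remainder (`O(‖δ‖^{n+1}) = O(ε^{n+1})`), the terms of degree `> n` (`O(ε^{n+1})`), and a term
Lipschitz in `R_ε`. So `‖E‖ ≤ A ε^{n+1} + B ‖R_ε‖`, and Grönwall once more gives
`‖R_ε‖ ≤ C ε^{n+1}`.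
-/

open MeasureTheory

/-- The coefficient `Φ_k(x)[v₁,…,v_{k−1}] :=
Σ_{j=2}^{k} Σ_{i₁+⋯+i_j = k, i_l ≥ 1} (1/j!) D^{(j)}F(x)[v_{i₁},…,v_{i_j}]`
of the ε-expansion. -/
noncomputable def Phi {H : Type*} [NormedAddCommGroup H] [NormedSpace ℝ H]
    (F : H → H) (k : ℕ) (x : H) (v : ℕ → H) : H :=
  ∑ j ∈ Finset.Icc 2 k, (j.factorial : ℝ)⁻¹ •
    ∑ i ∈ (Fintype.piFinset fun _ : Fin j => Finset.Icc 1 k).filter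
        (fun i => ∑ l, i l = k),
      iteratedFDeriv ℝ j F x (fun l => v (i l))

open Real Finset

theorem le_mul_exp_of_le_add_mul_integral {g : ℝ → ℝ} {T a b : ℝ} (hb : 0 ≤ b)
    (hg : ContinuousOn g (Set.Icc 0 T))
    (h : ∀ t ∈ Set.Icc 0 T, g t ≤ a + b * ∫ s in (0:ℝ)..t, g s) :
    ∀ t ∈ Set.Icc 0 T, g t ≤ a * exp (b * t) := by
  set G : ℝ → ℝ := fun t => ∫ s in (0:ℝ)..t, g s
  have hG : ∀ t ∈ Set.Ico 0 T, HasDerivWithinAt G (g t) (Set.Ici t) t := by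
    intro t ht
    have hgt : ContinuousWithinAt g (Set.Ici t) t := by
      have := (hg t (Set.Ico_subset_Icc_self ht)).mono (Set.Icc_subset_Icc_left ht.1)
      rwa [ContinuousWithinAt, nhdsWithin_Icc_eq_nhdsGE ht.2] at this
    refine intervalIntegral.integral_hasDerivWithinAt_right
      ((hg.mono (Set.Icc_subset_Icc_right ht.2.le)).intervalIntegrable_of_Icc ht.1)
      ⟨Set.Icc t T, Ioc_mem_nhdsGT ht.2 |> Filter.mem_of_superset <| Set.Ioc_subset_Icc_self,
        (hg.mono (Set.Icc_subset_Icc_left ht.1)).aestronglyMeasurable measurableSet_Icc⟩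
      (hgt.mono Set.Ioi_subset_Ici_self)
  have hGcont : ContinuousOn G (Set.Icc 0 T) := fun t ht => by
    have hgi : IntegrableOn g (Set.uIcc 0 T) := by
      rw [Set.uIcc_of_le (ht.1.trans ht.2)]; exact hg.integrableOn_Icc
    exact (intervalIntegral.continuousOn_primitive_interval hgi).mono Set.Icc_subset_uIcc t ht
  have hGle := le_gronwallBound_of_liminf_deriv_right_le hGcont
    (fun t ht _ hr => (hG t ht).liminf_right_slope_le hr) (δ := 0) (by simp [G])
    (fun t ht => (h t (Set.Ico_subset_Icc_self ht)).trans_eq (add_comm _ _))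
  intro t ht
  calc g t ≤ a + b * G t := h t ht
    _ ≤ a + b * gronwallBound 0 b a t := by gcongr; simpa using hGle t ht
    _ = a * exp (b * t) := by
      rcases hb.eq_or_lt with rfl | hb
      · simp
      · rw [gronwallBound_of_K_ne_0 hb.ne']; field_simp; ring

section Duhamel

variable {E : Type*} [NormedAddCommGroup E] [NormedSpace ℝ E] {S : ℝ → E →L[ℝ] E}

theorem continuousOn_semigroup_conv
    (hScont : ∀ x, ContinuousOn (fun t => S t x) (Set.Ici 0)) {C : ℝ} (hS : ∀ t ≥ 0, ‖S t‖ ≤ C)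
    {t : ℝ} {G : ℝ → E} (hG : ContinuousOn G (Set.Icc 0 t)) :
    ContinuousOn (fun s => S (t - s) (G s)) (Set.Icc 0 t) := by
  intro s₀ hs₀
  have hshift : ContinuousWithinAt (fun s => S (t - s) (G s₀)) (Set.Icc 0 t) s₀ :=
    (hScont (G s₀) (t - s₀) (sub_nonneg.2 hs₀.2)).comp
      (continuous_const.sub continuous_id).continuousWithinAt fun s hs => sub_nonneg.2 hs.2
  rw [ContinuousWithinAt, tendsto_iff_norm_sub_tendsto_zero] at hshift ⊢
  have hGs := tendsto_iff_norm_sub_tendsto_zero.1 (hG s₀ hs₀)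
  refine squeeze_zero' (Filter.Eventually.of_forall fun _ => norm_nonneg _) ?_
    (by simpa using (hGs.const_mul C).add hshift)
  filter_upwards [self_mem_nhdsWithin] with s hs
  calc ‖S (t - s) (G s) - S (t - s₀) (G s₀)‖
      = ‖S (t - s) (G s - G s₀) + (S (t - s) (G s₀) - S (t - s₀) (G s₀))‖ := by
        rw [map_sub, sub_add_sub_cancel]
    _ ≤ C * ‖G s - G s₀‖ + ‖S (t - s) (G s₀) - S (t - s₀) (G s₀)‖ :=
        norm_add_le_of_le ((S _).le_of_opNorm_le (hS _ (sub_nonneg.2 hs.2)) _) le_rfl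

theorem intervalIntegrable_semigroup_conv
    (hScont : ∀ x, ContinuousOn (fun t => S t x) (Set.Ici 0)) {C : ℝ} (hS : ∀ t ≥ 0, ‖S t‖ ≤ C)
    {T t : ℝ} (ht : t ∈ Set.Icc 0 T) {G : ℝ → E} (hG : ContinuousOn G (Set.Icc 0 T)) :
    IntervalIntegrable (fun s => S (t - s) (G s)) volume 0 t :=
  (continuousOn_semigroup_conv hScont hS (hG.mono (Set.Icc_subset_Icc_right ht.2))
    ).intervalIntegrable_of_Icc ht.1

theorem norm_integral_semigroup_conv_le (hS : ∀ t ≥ 0, ‖S t‖ ≤ 1) {t : ℝ} (ht : 0 ≤ t)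
    {G : ℝ → E} {g : ℝ → ℝ} (hG : ∀ s ∈ Set.Icc 0 t, ‖G s‖ ≤ g s)
    (hg : IntervalIntegrable g volume 0 t) :
    ‖∫ s in (0:ℝ)..t, S (t - s) (G s)‖ ≤ ∫ s in (0:ℝ)..t, g s := by
  refine intervalIntegral.norm_integral_le_of_norm_le ht
    (Filter.Eventually.of_forall fun s hs => ?_) hg
  simpa using (S _).le_of_opNorm_le_of_le (hS _ (sub_nonneg.2 hs.2)) (hG s ⟨hs.1.le, hs.2⟩)

theorem norm_le_mul_exp_of_mild (hS : ∀ t ≥ 0, ‖S t‖ ≤ 1) {T a b c : ℝ} (ha : 0 ≤ a)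
    (hb : 0 ≤ b) (hc : 0 ≤ c) {R f : ℝ → E} (hR : ContinuousOn R (Set.Icc 0 T))
    (hmild : ∀ t ∈ Set.Icc 0 T, ‖R t - ∫ s in (0:ℝ)..t, S (t - s) (f s)‖ ≤ c)
    (hf : ∀ s ∈ Set.Icc 0 T, ‖f s‖ ≤ a + b * ‖R s‖) :
    ∀ t ∈ Set.Icc 0 T, ‖R t‖ ≤ (c + a * T) * exp (b * T) := by
  have hineq : ∀ t ∈ Set.Icc 0 T, ‖R t‖ ≤ (c + a * T) + b * ∫ s in (0:ℝ)..t, ‖R s‖ := by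
    intro t ht
    have hRt : IntervalIntegrable (fun s => ‖R s‖) volume 0 t :=
      (hR.norm.mono (Set.Icc_subset_Icc_right ht.2)).intervalIntegrable_of_Icc ht.1
    have hint := norm_integral_semigroup_conv_le hS ht.1
      (fun s hs => hf s ⟨hs.1, hs.2.trans ht.2⟩) (intervalIntegrable_const.add (hRt.const_mul b))
    rw [intervalIntegral.integral_add intervalIntegrable_const (hRt.const_mul b),
      intervalIntegral.integral_const, intervalIntegral.integral_const_mul, smul_eq_mul,
      sub_zero] at hint
    have := norm_le_insert' (R t) (∫ s in (0:ℝ)..t, S (t - s) (f s))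
    nlinarith [hmild t ht, ht.2]
  intro t ht
  refine (le_mul_exp_of_le_add_mul_integral hb hR.norm hineq t ht).trans ?_
  gcongr
  · nlinarith [ht.1.trans ht.2]
  · exact ht.2

end Duhamel

section Taylor

variable {E F : Type*} [NormedAddCommGroup E] [NormedSpace ℝ E]
  [NormedAddCommGroup F] [NormedSpace ℝ F]

noncomputable def taylorIncrement (f : E → F) (n : ℕ) (x z : E) : F :=
  ∑ j ∈ Icc 1 n, (j.factorial : ℝ)⁻¹ • iteratedFDeriv ℝ j f x (fun _ => z)

theorem iteratedDeriv_comp_add_smul {f : E → F} {N : ℕ} (hf : ContDiff ℝ N f) {k : ℕ} (hk : k ≤ N)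
    (x v : E) (τ : ℝ) :
    iteratedDeriv k (fun σ : ℝ => f (x + σ • v)) τ
      = iteratedFDeriv ℝ k f (x + τ • v) (fun _ => v) := by
  have hcomp : (fun σ : ℝ => f (x + σ • v))
      = (fun y => f (x + y)) ∘ (ContinuousLinearMap.id ℝ ℝ).smulRight v := by
    ext σ; simp
  rw [iteratedDeriv_eq_iteratedFDeriv, hcomp,
    ContinuousLinearMap.iteratedFDeriv_comp_right (f := fun y => f (x + y)) _
      (hf.comp (contDiff_const.add contDiff_id)) _ (by exact_mod_cast hk),
    iteratedFDeriv_comp_add_left]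
  simp

theorem norm_sub_taylor_le {f : E → F} {N : ℕ} (hf : ContDiff ℝ (N + 1) f) {C : ℝ}
    (hC : ∀ y, ‖iteratedFDeriv ℝ (N + 1) f y‖ ≤ C) (x v : E) :
    ‖f (x + v) - ∑ j ∈ range (N + 1), (j.factorial : ℝ)⁻¹ • iteratedFDeriv ℝ j f x (fun _ => v)‖
      ≤ C / N.factorial * ‖v‖ ^ (N + 1) := by
  set g : ℝ → F := fun σ => f (x + σ • v)
  have hg : ContDiff ℝ (N + 1) g := hf.comp (contDiff_const.add (contDiff_id.smul contDiff_const))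
  have hderiv : ∀ k ≤ N + 1, ∀ τ ∈ Set.Icc (0:ℝ) 1,
      iteratedDerivWithin k g (Set.Icc 0 1) τ = iteratedFDeriv ℝ k f (x + τ • v) (fun _ => v) := by
    intro k hk τ hτ
    rw [iteratedDerivWithin_eq_iteratedDeriv (uniqueDiffOn_Icc zero_lt_one)
      (hg.contDiffAt.of_le (by exact_mod_cast hk)) hτ, iteratedDeriv_comp_add_smul hf hk]
  have hbound : ∀ τ ∈ Set.Icc (0:ℝ) 1,
      ‖iteratedDerivWithin (N + 1) g (Set.Icc 0 1) τ‖ ≤ C * ‖v‖ ^ (N + 1) := by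
    intro τ hτ
    rw [hderiv _ le_rfl τ hτ]
    refine ((iteratedFDeriv ℝ (N + 1) f _).le_opNorm _).trans ?_
    simp only [prod_const, card_univ, Fintype.card_fin]
    gcongr
    exact hC _
  have := taylor_mean_remainder_bound zero_le_one hg.contDiffOn
    (Set.right_mem_Icc.2 zero_le_one) hbound
  rw [taylor_within_apply] at this
  convert this using 3
  · simp [g]
  · refine sum_congr rfl fun j hj => ?_
    rw [hderiv j (by simp at hj; omega) 0 (Set.left_mem_Icc.2 zero_le_one)]
    simp
  · ring

lemma norm_sub_sub_taylorIncrement_le {f : E → F} {n : ℕ} (hf : ContDiff ℝ (n + 1) f) {C : ℝ}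
    (hC : ∀ y, ‖iteratedFDeriv ℝ (n + 1) f y‖ ≤ C) (x z : E) :
    ‖f (x + z) - f x - taylorIncrement f n x z‖ ≤ C / n.factorial * ‖z‖ ^ (n + 1) := by
  have := norm_sub_taylor_le hf hC x z
  rwa [range_eq_Ico, sum_eq_sum_Ico_succ_bot n.succ_pos, Nat.succ_eq_add_one, zero_add,
    Ico_add_one_right_eq_Icc, iteratedFDeriv_zero_apply, Nat.factorial_zero, Nat.cast_one,
    inv_one, one_smul, ← sub_sub] at this

lemma norm_taylorIncrement_sub_le {f : E → F} {n : ℕ} {x z z' : E} {γ : ℕ → ℝ} {R : ℝ}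
    (hγ : ∀ j ∈ Icc 1 n, ‖iteratedFDeriv ℝ j f x‖ ≤ γ j) (hz : ‖z‖ ≤ R) (hz' : ‖z'‖ ≤ R) :
    ‖taylorIncrement f n x z - taylorIncrement f n x z'‖
      ≤ (∑ j ∈ Icc 1 n, (j.factorial : ℝ)⁻¹ * (γ j * j * R ^ (j - 1))) * ‖z - z'‖ := by
  rw [taylorIncrement, taylorIncrement, ← sum_sub_distrib, sum_mul]
  refine (norm_sum_le _ _).trans (sum_le_sum fun j hj => ?_)
  have : Nonempty (Fin j) := ⟨⟨0, (mem_Icc.1 hj).1⟩⟩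
  have hD := (iteratedFDeriv ℝ j f x).norm_image_sub_le (fun _ => z) (fun _ => z')
  rw [show (fun _ : Fin j => z) - (fun _ => z') = fun _ => z - z' from rfl, pi_norm_const,
    pi_norm_const, pi_norm_const, Fintype.card_fin] at hD
  rw [← smul_sub, norm_smul, Real.norm_of_nonneg (by positivity), mul_assoc]
  gcongr
  refine hD.trans ?_
  have hγj : 0 ≤ γ j := (norm_nonneg _).trans (hγ j hj)
  gcongr
  exacts [hγ j hj, max_le hz hz']

lemma norm_sub_le_of_norm_iteratedFDeriv_one_le {f : E → F} (hf : Differentiable ℝ f) {C : ℝ}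
    (hC : ∀ y, ‖iteratedFDeriv ℝ 1 f y‖ ≤ C) (x y : E) : ‖f x - f y‖ ≤ C * ‖x - y‖ :=
  convex_univ.norm_image_sub_le_of_norm_fderiv_le (fun z _ => hf z)
    (fun z _ => (norm_iteratedFDeriv_one f).symm.trans_le (hC z)) (Set.mem_univ y)
    (Set.mem_univ x)

end Taylor

theorem ContinuousMultilinearMap.map_sum_pow_smul {𝕜 E F : Type*} [NontriviallyNormedField 𝕜]
    [NormedAddCommGroup E] [NormedSpace 𝕜 E] [NormedAddCommGroup F] [NormedSpace 𝕜 F] {j : ℕ}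
    (f : ContinuousMultilinearMap 𝕜 (fun _ : Fin j => E) F) (s : Finset ℕ) (ε : 𝕜) (w : ℕ → E) :
    f (fun _ => ∑ k ∈ s, ε ^ k • w k)
      = ∑ i ∈ Fintype.piFinset (fun _ : Fin j => s), ε ^ (∑ l, i l) • f (fun l => w (i l)) := by
  rw [f.map_sum_finset (fun _ k => ε ^ k • w k)]
  refine sum_congr rfl fun i _ => ?_
  rw [f.map_smul_univ (fun l => ε ^ i l) (fun l => w (i l)), prod_pow_eq_pow_sum]

def compositionTuples (j k : ℕ) : Finset (Fin j → ℕ) :=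
  (Fintype.piFinset fun _ : Fin j => Icc 1 k).filter (fun i => ∑ l, i l = k)

lemma le_sum_of_mem_piFinset_Icc {j n : ℕ} {i : Fin j → ℕ}
    (hi : i ∈ Fintype.piFinset fun _ : Fin j => Icc 1 n) : j ≤ ∑ l, i l := by
  simpa using card_nsmul_le_sum univ i 1 fun l _ => (mem_Icc.1 (Fintype.mem_piFinset.1 hi l)).1

lemma filter_sum_eq_eq_compositionTuples {j n k : ℕ} (hkn : k ≤ n) :
    (Fintype.piFinset fun _ : Fin j => Icc 1 n).filter (fun i => ∑ l, i l = k)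
      = compositionTuples j k := by
  ext i
  simp only [compositionTuples, mem_filter, Fintype.mem_piFinset, mem_Icc]
  refine ⟨fun ⟨h, hk⟩ => ⟨fun l => ⟨(h l).1, ?_⟩, hk⟩,
    fun ⟨h, hk⟩ => ⟨fun l => ⟨(h l).1, (h l).2.trans hkn⟩, hk⟩⟩
  exact hk ▸ single_le_sum (fun l _ => Nat.zero_le (i l)) (mem_univ l)

lemma compositionTuples_eq_empty_of_lt {j k : ℕ} (hkj : k < j) : compositionTuples j k = ∅ :=
  filter_eq_empty_iff.2 fun _ hi hk => (le_sum_of_mem_piFinset_Icc hi).not_gt (hk ▸ hkj)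

lemma compositionTuples_one {k : ℕ} (hk : 1 ≤ k) : compositionTuples 1 k = {fun _ => k} := by
  ext i
  simp only [compositionTuples, mem_filter, Fintype.mem_piFinset, mem_Icc, Fin.sum_univ_one,
    mem_singleton]
  refine ⟨fun ⟨_, h⟩ => funext fun l => by rwa [Subsingleton.elim l 0], ?_⟩
  rintro rfl
  exact ⟨fun _ => ⟨hk, le_rfl⟩, rfl⟩

lemma sum_filter_not_lt_eq_sum_compositionTuples {M : Type*} [AddCommMonoid M] {j n : ℕ}
    (hj : 1 ≤ j) (f : (Fin j → ℕ) → ℕ → M) :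
    ∑ i ∈ (Fintype.piFinset fun _ : Fin j => Icc 1 n).filter (fun i => ¬ n < ∑ l, i l),
        f i (∑ l, i l)
      = ∑ k ∈ Icc 1 n, ∑ i ∈ compositionTuples j k, f i k := by
  rw [← sum_fiberwise_of_maps_to (g := fun i => ∑ l, i l) (t := Icc 1 n) fun i hi => by
    have := le_sum_of_mem_piFinset_Icc (mem_filter.1 hi).1
    simp only [mem_filter, not_lt] at hi
    exact mem_Icc.2 ⟨hj.trans this, hi.2⟩]
  refine sum_congr rfl fun k hk => ?_
  rw [← filter_sum_eq_eq_compositionTuples (mem_Icc.1 hk).2, filter_filter]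
  refine sum_congr (filter_congr fun i _ => ?_) fun i hi => by rw [(mem_filter.1 hi).2]
  simp only [not_lt, and_iff_right_iff_imp]
  exact fun h => h ▸ (mem_Icc.1 hk).2

section Expansion

variable {H : Type*} [NormedAddCommGroup H] [NormedSpace ℝ H]

/-- The coefficient of `ε ^ k` in `F (x + Σ_i ε^i v_i)`, which is the forcing term in the
equation of `u_k`. -/
noncomputable def expansionCoeff (F : H → H) (k : ℕ) (x : H) (v : ℕ → H) : H :=
  (iteratedFDeriv ℝ 1 F x fun _ => v k) + Phi F k x v

noncomputable def highOrderTerms (F : H → H) (n : ℕ) (x : H) (w : ℕ → H) (ε : ℝ) : H :=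
  ∑ j ∈ Icc 1 n, (j.factorial : ℝ)⁻¹ •
    ∑ i ∈ (Fintype.piFinset fun _ : Fin j => Icc 1 n).filter (fun i => n < ∑ l, i l),
      ε ^ (∑ l, i l) • iteratedFDeriv ℝ j F x (fun l => w (i l))

lemma Phi_eq_sum_compositionTuples (F : H → H) (k : ℕ) (x : H) (v : ℕ → H) :
    Phi F k x v = ∑ j ∈ Icc 2 k, (j.factorial : ℝ)⁻¹ •
      ∑ i ∈ compositionTuples j k, iteratedFDeriv ℝ j F x (fun l => v (i l)) :=
  rfl

lemma expansionCoeff_one (F : H → H) (x : H) (v : ℕ → H) :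
    expansionCoeff F 1 x v = iteratedFDeriv ℝ 1 F x fun _ => v 1 := by
  simp [expansionCoeff, Phi]

lemma expansionCoeff_eq_sum (F : H → H) {n k : ℕ} (hk : 1 ≤ k) (hkn : k ≤ n) (x : H)
    (v : ℕ → H) :
    expansionCoeff F k x v = ∑ j ∈ Icc 1 n, (j.factorial : ℝ)⁻¹ •
      ∑ i ∈ compositionTuples j k, iteratedFDeriv ℝ j F x (fun l => v (i l)) := by
  rw [← insert_Icc_add_one_left_eq_Icc (hk.trans hkn), sum_insert (by simp), expansionCoeff,
    Phi_eq_sum_compositionTuples, compositionTuples_one hk]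
  congr 1
  · simp
  · refine sum_subset (Icc_subset_Icc_right hkn) fun j hjn hjk => ?_
    rw [compositionTuples_eq_empty_of_lt (by simp at hjn hjk; omega), sum_empty, smul_zero]

lemma taylorIncrement_sum_pow_smul (F : H → H) (n : ℕ) (x : H) (w : ℕ → H) (ε : ℝ) :
    taylorIncrement F n x (∑ k ∈ Icc 1 n, ε ^ k • w k)
      = ∑ k ∈ Icc 1 n, ε ^ k • expansionCoeff F k x w + highOrderTerms F n x w ε := by
  have hlow : ∀ j ∈ Icc 1 n,
      ∑ i ∈ (Fintype.piFinset fun _ : Fin j => Icc 1 n).filter (fun i => ¬ n < ∑ l, i l),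
        ε ^ (∑ l, i l) • iteratedFDeriv ℝ j F x (fun l => w (i l))
      = ∑ k ∈ Icc 1 n, ε ^ k •
          ∑ i ∈ compositionTuples j k, iteratedFDeriv ℝ j F x (fun l => w (i l)) := by
    intro j hj
    simp_rw [smul_sum]
    exact sum_filter_not_lt_eq_sum_compositionTuples (mem_Icc.1 hj).1
      fun i k => ε ^ k • iteratedFDeriv ℝ j F x (fun l => w (i l))
  have hcoeff : ∑ k ∈ Icc 1 n, ε ^ k • expansionCoeff F k x w
      = ∑ j ∈ Icc 1 n, (j.factorial : ℝ)⁻¹ • ∑ k ∈ Icc 1 n, ε ^ k •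
          ∑ i ∈ compositionTuples j k, iteratedFDeriv ℝ j F x (fun l => w (i l)) := by
    rw [sum_congr rfl fun k hk => by
      rw [expansionCoeff_eq_sum F (mem_Icc.1 hk).1 (mem_Icc.1 hk).2, smul_sum]]
    simp_rw [smul_sum, smul_comm (ε ^ _) (_ : ℝ)⁻¹]
    exact sum_comm
  rw [hcoeff, highOrderTerms, ← sum_add_distrib, taylorIncrement]
  refine sum_congr rfl fun j hj => ?_
  rw [← smul_add, ContinuousMultilinearMap.map_sum_pow_smul, ← hlow j hj,
    sum_filter_not_add_sum_filter]

lemma norm_highOrderTerms_le {F : H → H} {n : ℕ} {x : H} {w : ℕ → H} {γ : ℕ → ℝ} {M ε : ℝ}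
    (hγ : ∀ j ∈ Icc 1 n, ‖iteratedFDeriv ℝ j F x‖ ≤ γ j) (hw : ∀ k ∈ Icc 1 n, ‖w k‖ ≤ M)
    (hε₀ : 0 ≤ ε) (hε₁ : ε ≤ 1) :
    ‖highOrderTerms F n x w ε‖
      ≤ (∑ j ∈ Icc 1 n, (j.factorial : ℝ)⁻¹ * ((n : ℝ) ^ j * (γ j * M ^ j))) * ε ^ (n + 1) := by
  rw [highOrderTerms, sum_mul]
  refine (norm_sum_le _ _).trans (sum_le_sum fun j hj => ?_)
  have hγj : 0 ≤ γ j := (norm_nonneg _).trans (hγ j hj)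
  have hM : 0 ≤ M := (norm_nonneg _).trans (hw j hj)
  have hterm : ∀ i ∈ (Fintype.piFinset fun _ : Fin j => Icc 1 n).filter (fun i => n < ∑ l, i l),
      ‖ε ^ (∑ l, i l) • iteratedFDeriv ℝ j F x (fun l => w (i l))‖ ≤ γ j * M ^ j * ε ^ (n + 1) := by
    intro i hi
    obtain ⟨hi, hlt⟩ := mem_filter.1 hi
    have hD : ‖iteratedFDeriv ℝ j F x (fun l => w (i l))‖ ≤ γ j * M ^ j :=
      calc ‖iteratedFDeriv ℝ j F x (fun l => w (i l))‖
          ≤ ‖iteratedFDeriv ℝ j F x‖ * ∏ l, ‖w (i l)‖ := ContinuousMultilinearMap.le_opNorm _ _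
        _ ≤ γ j * ∏ _l : Fin j, M := by
          gcongr with l
          exacts [hγ j hj, hw _ (Fintype.mem_piFinset.1 hi l)]
        _ = γ j * M ^ j := by simp
    rw [norm_smul, norm_pow, Real.norm_of_nonneg hε₀, mul_comm]
    exact mul_le_mul hD (pow_le_pow_of_le_one hε₀ hε₁ hlt) (by positivity) (by positivity)
  have hcard : (((Fintype.piFinset fun _ : Fin j => Icc 1 n).filter
      (fun i => n < ∑ l, i l)).card : ℝ) ≤ (n : ℝ) ^ j := by
    exact_mod_cast (card_filter_le _ _).trans (by simp)
  rw [norm_smul, Real.norm_of_nonneg (by positivity), mul_assoc]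
  gcongr
  refine (norm_sum_le_of_le _ hterm).trans ?_
  rw [sum_const, nsmul_eq_mul, ← mul_assoc]
  gcongr

lemma norm_sum_pow_smul_le {n : ℕ} {w : ℕ → H} {M ε : ℝ} (hw : ∀ k ∈ Icc 1 n, ‖w k‖ ≤ M)
    (hε₀ : 0 ≤ ε) (hε₁ : ε ≤ 1) : ‖∑ k ∈ Icc 1 n, ε ^ k • w k‖ ≤ n * M := by
  have hterm : ∀ k ∈ Icc 1 n, ‖ε ^ k • w k‖ ≤ M := fun k hk => by
    rw [norm_smul, norm_pow, Real.norm_of_nonneg hε₀]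
    exact (mul_le_of_le_one_left (norm_nonneg _) (pow_le_one₀ hε₀ hε₁)).trans (hw k hk)
  exact (norm_sum_le_of_le _ hterm).trans (by simp)

theorem exists_norm_sub_sub_sum_expansionCoeff_le {F : H → H} {n : ℕ} (hF : ContDiff ℝ (n + 1) F)
    {γ : ℕ → ℝ} (hγ : ∀ j ∈ Icc 1 (n + 1), ∀ y, ‖iteratedFDeriv ℝ j F y‖ ≤ γ j)
    {K M : ℝ} (hK : 0 ≤ K) (hM : 0 ≤ M) :
    ∃ A B : ℝ, 0 ≤ A ∧ 0 ≤ B ∧ ∀ ε ∈ Set.Ioc (0:ℝ) 1, ∀ x y : H, ∀ w : ℕ → H,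
      ‖y - x‖ ≤ K * ε → (∀ k ∈ Icc 1 n, ‖w k‖ ≤ M) →
      ‖F y - F x - ∑ k ∈ Icc 1 n, ε ^ k • expansionCoeff F k x w‖
        ≤ A * ε ^ (n + 1) + B * ‖y - x - ∑ k ∈ Icc 1 n, ε ^ k • w k‖ := by
  have hγ0 : ∀ j ∈ Icc 1 (n + 1), 0 ≤ γ j := fun j hj => (norm_nonneg _).trans (hγ j hj 0)
  have hγ' : ∀ x, ∀ j ∈ Icc 1 n, ‖iteratedFDeriv ℝ j F x‖ ≤ γ j := fun x j hj =>
    hγ j (Icc_subset_Icc_right n.le_succ hj) x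
  have hγn : ∀ j ∈ Icc 1 n, 0 ≤ γ j := fun j hj => hγ0 j (Icc_subset_Icc_right n.le_succ hj)
  set R := K + n * M
  refine ⟨γ (n + 1) / n.factorial * K ^ (n + 1)
      + ∑ j ∈ Icc 1 n, (j.factorial : ℝ)⁻¹ * ((n : ℝ) ^ j * (γ j * M ^ j)),
    ∑ j ∈ Icc 1 n, (j.factorial : ℝ)⁻¹ * (γ j * j * R ^ (j - 1)), ?_, ?_, ?_⟩
  · have := hγ0 (n + 1) (by simp)
    exact add_nonneg (by positivity) (sum_nonneg fun j hj => by have := hγn j hj; positivity)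
  · exact sum_nonneg fun j hj => by have := hγn j hj; positivity
  intro ε ⟨hε₀, hε₁⟩ x y w hyx hw
  set v := ∑ k ∈ Icc 1 n, ε ^ k • w k
  have hv : ‖v‖ ≤ n * M := norm_sum_pow_smul_le hw hε₀.le hε₁
  have hR : ‖y - x‖ ≤ R := by nlinarith
  have hsplit : F y - F x - ∑ k ∈ Icc 1 n, ε ^ k • expansionCoeff F k x w
      = (F y - F x - taylorIncrement F n x (y - x))
        + (taylorIncrement F n x (y - x) - taylorIncrement F n x v)
        + highOrderTerms F n x w ε := by
    rw [taylorIncrement_sum_pow_smul]; abel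
  rw [hsplit]
  refine norm_add₃_le.trans ?_
  have htaylor := norm_sub_sub_taylorIncrement_le hF (hγ (n + 1) (by simp)) x (y - x)
  have hlip := norm_taylorIncrement_sub_le (hγ' x) hR (hv.trans (by linarith))
  have hhigh := norm_highOrderTerms_le (hγ' x) hw hε₀.le hε₁
  have hδ : ‖y - x‖ ^ (n + 1) ≤ (K * ε) ^ (n + 1) := by gcongr
  rw [add_sub_cancel] at htaylor
  have := hγ0 (n + 1) (by simp)
  have : γ (n + 1) / n.factorial * ‖y - x‖ ^ (n + 1)
      ≤ γ (n + 1) / n.factorial * K ^ (n + 1) * ε ^ (n + 1) := by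
    rw [mul_assoc, ← mul_pow]; gcongr
  linarith

end Expansion

section SmallNoise

variable {H : Type*} [NormedAddCommGroup H] [NormedSpace ℝ H] {S : ℝ → H →L[ℝ] H}

lemma continuousOn_iteratedFDeriv_apply {E F : Type*} [NormedAddCommGroup E] [NormedSpace ℝ E]
    [NormedAddCommGroup F] [NormedSpace ℝ F] {f : E → F} {N j : ℕ} (hf : ContDiff ℝ N f)
    (hj : j ≤ N) {A : Set ℝ} {φ : ℝ → E} (hφ : ContinuousOn φ A) {m : Fin j → ℝ → E}
    (hm : ∀ l, ContinuousOn (m l) A) :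
    ContinuousOn (fun s => iteratedFDeriv ℝ j f (φ s) (fun l => m l s)) A :=
  continuous_eval.comp_continuousOn
    (((hf.continuous_iteratedFDeriv (by exact_mod_cast hj)).comp_continuousOn hφ).prodMk
      (continuousOn_pi.2 hm))

lemma continuousOn_expansionCoeff {F : H → H} {n k : ℕ} (hF : ContDiff ℝ n F) (hk : k ∈ Icc 1 n)
    {A : Set ℝ} {φ : ℝ → H} (hφ : ContinuousOn φ A) {v : ℕ → ℝ → H}
    (hv : ∀ i ∈ Icc 1 k, ContinuousOn (v i) A) :
    ContinuousOn (fun s => expansionCoeff F k (φ s) (fun i => v i s)) A := by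
  obtain ⟨hk1, hkn⟩ := mem_Icc.1 hk
  simp only [expansionCoeff, Phi_eq_sum_compositionTuples]
  refine (continuousOn_iteratedFDeriv_apply hF (hk1.trans hkn) hφ fun _ =>
    hv k (mem_Icc.2 ⟨hk1, le_rfl⟩)).add
      (continuousOn_finsetSum _ fun j hj => (continuousOn_finsetSum _ fun i hi => ?_).const_smul _)
  exact continuousOn_iteratedFDeriv_apply hF ((mem_Icc.1 hj).2.trans hkn) hφ fun l =>
    hv _ (Fintype.mem_piFinset.1 (mem_filter.1 hi).1 l)

lemma sub_sub_sum_pow_smul_eq_integral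
    (hScont : ∀ x, ContinuousOn (fun t => S t x) (Set.Ici 0)) (hS : ∀ t ≥ 0, ‖S t‖ ≤ 1)
    {n : ℕ} (hn : 1 ≤ n) {T t ε : ℝ} (ht : t ∈ Set.Icc 0 T) {U Φ u0 ℓ : H} {V : ℕ → H}
    {f g : ℝ → H} {G : ℕ → ℝ → H} (hf : ContinuousOn f (Set.Icc 0 T))
    (hg : ContinuousOn g (Set.Icc 0 T)) (hG : ∀ k ∈ Icc 1 n, ContinuousOn (G k) (Set.Icc 0 T))
    (hU : U = S t u0 + (∫ s in (0:ℝ)..t, S (t - s) (f s)) + ε • ℓ)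
    (hΦ : Φ = S t u0 + ∫ s in (0:ℝ)..t, S (t - s) (g s))
    (hV : ∀ k ∈ Icc 1 n, V k = (∫ s in (0:ℝ)..t, S (t - s) (G k s)) + if k = 1 then ℓ else 0) :
    U - Φ - ∑ k ∈ Icc 1 n, ε ^ k • V k
      = ∫ s in (0:ℝ)..t, S (t - s) (f s - g s - ∑ k ∈ Icc 1 n, ε ^ k • G k s) := by
  have hint : ∀ {G : ℝ → H}, ContinuousOn G (Set.Icc 0 T) →
      IntervalIntegrable (fun s => S (t - s) (G s)) volume 0 t :=
    intervalIntegrable_semigroup_conv hScont hS ht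
  have hGsum : ContinuousOn (fun s => ∑ k ∈ Icc 1 n, ε ^ k • G k s) (Set.Icc 0 T) :=
    continuousOn_finsetSum _ fun k hk => (hG k hk).const_smul _
  have hsum : ∑ k ∈ Icc 1 n, ε ^ k • V k
      = (∫ s in (0:ℝ)..t, S (t - s) (∑ k ∈ Icc 1 n, ε ^ k • G k s)) + ε • ℓ := by
    rw [sum_congr rfl fun k hk => by rw [hV k hk]]
    simp_rw [smul_add, sum_add_distrib, smul_ite, smul_zero, sum_ite_eq',
      if_pos (mem_Icc.2 ⟨le_rfl, hn⟩), pow_one, map_sum, map_smul]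
    rw [intervalIntegral.integral_finsetSum (f := fun k s => ε ^ k • S (t - s) (G k s))
      fun k hk => (hint (hG k hk)).smul (ε ^ k)]
    simp_rw [intervalIntegral.integral_smul]
  simp_rw [map_sub]
  rw [intervalIntegral.integral_sub ((hint hf).sub (hint hg)) (hint hGsum),
    intervalIntegral.integral_sub (hint hf) (hint hg), hU, hΦ, hsum]
  abel

lemma norm_sub_le_mul_of_mild {F : H → H}
    (hScont : ∀ x, ContinuousOn (fun t => S t x) (Set.Ici 0)) (hS : ∀ t ≥ 0, ‖S t‖ ≤ 1)
    (hF : Differentiable ℝ F) {L : ℝ} (hL : ∀ y, ‖iteratedFDeriv ℝ 1 F y‖ ≤ L) {T M ε : ℝ}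
    (hM : 0 ≤ M) (hε : 0 ≤ ε) {u0 : H}
    {ℓ φ u : ℝ → H} (huc : ContinuousOn u (Set.Icc 0 T)) (hφc : ContinuousOn φ (Set.Icc 0 T))
    (hu : ∀ t ∈ Set.Icc 0 T, u t = S t u0 + (∫ s in (0:ℝ)..t, S (t - s) (F (u s))) + ε • ℓ t)
    (hφ : ∀ t ∈ Set.Icc 0 T, φ t = S t u0 + ∫ s in (0:ℝ)..t, S (t - s) (F (φ s)))
    (hℓM : ∀ t ∈ Set.Icc 0 T, ‖ℓ t‖ ≤ M) :
    ∀ t ∈ Set.Icc 0 T, ‖u t - φ t‖ ≤ M * exp (L * T) * ε := by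
  have hL0 : 0 ≤ L := (norm_nonneg _).trans (hL 0)
  have hmild : ∀ t ∈ Set.Icc 0 T,
      ‖(u - φ) t - ∫ s in (0:ℝ)..t, S (t - s) (F (u s) - F (φ s))‖ ≤ ε * M := by
    intro t ht
    simp_rw [map_sub]
    rw [intervalIntegral.integral_sub
      (intervalIntegrable_semigroup_conv hScont hS ht (G := fun s => F (u s))
        (hF.continuous.comp_continuousOn huc))
      (intervalIntegrable_semigroup_conv hScont hS ht (G := fun s => F (φ s))
        (hF.continuous.comp_continuousOn hφc)),
      Pi.sub_apply, hu t ht, hφ t ht]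
    rw [show ∀ a b c d : H, a + b + c - (a + d) - (b - d) = c by intros; abel, norm_smul,
      Real.norm_of_nonneg hε]
    exact mul_le_mul_of_nonneg_left (hℓM t ht) hε
  intro t ht
  have := norm_le_mul_exp_of_mild hS le_rfl hL0 (mul_nonneg hε hM) (huc.sub hφc) hmild
    (fun s _ => by simpa using norm_sub_le_of_norm_iteratedFDeriv_one_le hF hL (u s) (φ s)) t ht
  simpa [mul_comm, mul_assoc, mul_left_comm] using this

end SmallNoise

theorem small_noise_asymptotic_expansion_general
    {H : Type*} [NormedAddCommGroup H] [NormedSpace ℝ H]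
    (S : ℝ → H →L[ℝ] H) (ω : ℝ) (hω : 0 < ω)
    (hScont : ∀ x : H, ContinuousOn (fun t => S t x) (Set.Ici (0:ℝ)))
    (hSnorm : ∀ t ≥ (0:ℝ), ‖S t‖ ≤ Real.exp (-ω * t))
    (n : ℕ) (hn : 1 ≤ n)
    (F : H → H) (hF : ContDiff ℝ (n + 1) F)
    (γ : ℕ → ℝ)
    (hγ : ∀ j ∈ Finset.Icc 1 (n + 1), ∀ y : H, ‖iteratedFDeriv ℝ j F y‖ ≤ γ j)
    (T : ℝ) (hT : 0 < T) (u0 : H) (M : ℝ) (hM : 0 < M)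
    (ℓ φ : ℝ → H) (u : ℝ → ℝ → H) (uk : ℕ → ℝ → H)
    (hφc : ContinuousOn φ (Set.Icc (0:ℝ) T))
    (huc : ∀ ε ∈ Set.Ioc (0:ℝ) 1, ContinuousOn (u ε) (Set.Icc (0:ℝ) T))
    (hukc : ∀ k ∈ Finset.Icc 1 n, ContinuousOn (uk k) (Set.Icc (0:ℝ) T))
    (hu : ∀ ε ∈ Set.Ioc (0:ℝ) 1, ∀ t ∈ Set.Icc (0:ℝ) T,
      u ε t = S t u0 + (∫ s in (0:ℝ)..t, S (t - s) (F (u ε s))) + ε • ℓ t)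
    (hφ : ∀ t ∈ Set.Icc (0:ℝ) T,
      φ t = S t u0 + ∫ s in (0:ℝ)..t, S (t - s) (F (φ s)))
    (hu1 : ∀ t ∈ Set.Icc (0:ℝ) T,
      uk 1 t = (∫ s in (0:ℝ)..t,
        S (t - s) (iteratedFDeriv ℝ 1 F (φ s) fun _ => uk 1 s)) + ℓ t)
    (huk : ∀ k, 2 ≤ k → k ≤ n → ∀ t ∈ Set.Icc (0:ℝ) T,
      uk k t = ∫ s in (0:ℝ)..t, S (t - s)
        ((iteratedFDeriv ℝ 1 F (φ s) fun _ => uk k s)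
          + Phi F k (φ s) (fun i => uk i s)))
    (hℓM : ∀ t ∈ Set.Icc (0:ℝ) T, ‖ℓ t‖ ≤ M)
    (hukM : ∀ k ∈ Finset.Icc 1 n, ∀ t ∈ Set.Icc (0:ℝ) T, ‖uk k t‖ ≤ M) :
    ∃ C > (0:ℝ), ∀ ε ∈ Set.Ioc (0:ℝ) 1, ∀ t ∈ Set.Icc (0:ℝ) T,
      ‖u ε t - φ t - ∑ k ∈ Finset.Icc 1 n, ε ^ k • uk k t‖ ≤ C * ε ^ (n + 1) := by
  have hS : ∀ t ≥ (0:ℝ), ‖S t‖ ≤ 1 := fun t ht =>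
    (hSnorm t ht).trans (exp_le_one_iff.2 (by nlinarith))
  have hukE : ∀ t ∈ Set.Icc 0 T, ∀ k ∈ Icc 1 n, uk k t = (∫ s in (0:ℝ)..t,
      S (t - s) (expansionCoeff F k (φ s) fun i => uk i s)) + if k = 1 then ℓ t else 0 := by
    intro t ht k hk
    rcases (mem_Icc.1 hk).1.eq_or_lt with rfl | hk1
    · simpa [expansionCoeff_one] using hu1 t ht
    · rw [if_neg hk1.ne', add_zero]
      exact huk k hk1 (mem_Icc.1 hk).2 t ht
  have hK := fun ε (hε : ε ∈ Set.Ioc (0:ℝ) 1) => norm_sub_le_mul_of_mild hScont hS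
    (hF.differentiable (by simp)) (hγ 1 (by simp)) hM.le hε.1.le (huc ε hε) hφc (hu ε hε) hφ hℓM
  obtain ⟨A, B, hA, hB, hE⟩ := exists_norm_sub_sub_sum_expansionCoeff_le hF hγ
    (K := M * exp (γ 1 * T)) (by positivity) hM.le
  refine ⟨A * T * exp (B * T) + 1, by positivity, fun ε hε t ht => ?_⟩
  have hR := norm_le_mul_exp_of_mild hS (mul_nonneg hA (pow_nonneg hε.1.le (n + 1))) hB le_rfl
    (R := fun t => u ε t - φ t - ∑ k ∈ Icc 1 n, ε ^ k • uk k t)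
    (((huc ε hε).sub hφc).sub (continuousOn_finsetSum _ fun k hk => (hukc k hk).const_smul _))
    (fun t ht => by
      rw [sub_sub_sum_pow_smul_eq_integral hScont hS hn ht
        (hF.continuous.comp_continuousOn (huc ε hε)) (hF.continuous.comp_continuousOn hφc)
        (fun k hk => continuousOn_expansionCoeff hF.of_succ hk hφc fun i hi =>
          hukc i (Icc_subset_Icc_right (mem_Icc.1 hk).2 hi)) (hu ε hε t ht) (hφ t ht)
        (hukE t ht)]
      simp)
    (fun s hs => hE ε hε _ _ _ (hK ε hε s hs) fun k hk => hukM k hk s hs) t ht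
  calc _ ≤ (0 + A * ε ^ (n + 1) * T) * exp (B * T) := hR
    _ ≤ (A * T * exp (B * T) + 1) * ε ^ (n + 1) := by nlinarith [pow_pos hε.1 (n + 1)]

theorem small_noise_asymptotic_expansion
    {H : Type*} [NormedAddCommGroup H] [NormedSpace ℝ H] [CompleteSpace H]
    (S : ℝ → H →L[ℝ] H) (ω : ℝ) (hω : 0 < ω)
    (hS0 : S 0 = ContinuousLinearMap.id ℝ H)
    (hSadd : ∀ t ≥ (0:ℝ), ∀ s ≥ (0:ℝ), S (t + s) = (S t).comp (S s))
    (hScont : ∀ x : H, ContinuousOn (fun t => S t x) (Set.Ici (0:ℝ)))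
    (hSnorm : ∀ t ≥ (0:ℝ), ‖S t‖ ≤ Real.exp (-ω * t))
    (n : ℕ) (hn : 1 ≤ n)
    (F : H → H) (hF : ContDiff ℝ (n + 1) F)
    (γ : ℕ → ℝ)
    (hγ : ∀ j ∈ Finset.Icc 1 (n + 1), ∀ y : H, ‖iteratedFDeriv ℝ j F y‖ ≤ γ j)
    (hωγ : γ 1 < ω)
    (T : ℝ) (hT : 0 < T) (u0 : H) (M : ℝ) (hM : 0 < M)
    (ℓ φ : ℝ → H) (u : ℝ → ℝ → H) (uk : ℕ → ℝ → H)
    (hℓc : ContinuousOn ℓ (Set.Icc (0:ℝ) T))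
    (hφc : ContinuousOn φ (Set.Icc (0:ℝ) T))
    (huc : ∀ ε ∈ Set.Ioc (0:ℝ) 1, ContinuousOn (u ε) (Set.Icc (0:ℝ) T))
    (hukc : ∀ k ∈ Finset.Icc 1 n, ContinuousOn (uk k) (Set.Icc (0:ℝ) T))
    (hu : ∀ ε ∈ Set.Ioc (0:ℝ) 1, ∀ t ∈ Set.Icc (0:ℝ) T,
      u ε t = S t u0 + (∫ s in (0:ℝ)..t, S (t - s) (F (u ε s))) + ε • ℓ t)
    (hφ : ∀ t ∈ Set.Icc (0:ℝ) T,
      φ t = S t u0 + ∫ s in (0:ℝ)..t, S (t - s) (F (φ s)))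
    (hu1 : ∀ t ∈ Set.Icc (0:ℝ) T,
      uk 1 t = (∫ s in (0:ℝ)..t,
        S (t - s) (iteratedFDeriv ℝ 1 F (φ s) fun _ => uk 1 s)) + ℓ t)
    (huk : ∀ k, 2 ≤ k → k ≤ n → ∀ t ∈ Set.Icc (0:ℝ) T,
      uk k t = ∫ s in (0:ℝ)..t, S (t - s)
        ((iteratedFDeriv ℝ 1 F (φ s) fun _ => uk k s)
          + Phi F k (φ s) (fun i => uk i s)))
    (hℓM : ∀ t ∈ Set.Icc (0:ℝ) T, ‖ℓ t‖ ≤ M)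
    (hukM : ∀ k ∈ Finset.Icc 1 n, ∀ t ∈ Set.Icc (0:ℝ) T, ‖uk k t‖ ≤ M) :
    ∃ C > (0:ℝ), ∀ ε ∈ Set.Ioc (0:ℝ) 1, ∀ t ∈ Set.Icc (0:ℝ) T,
      ‖u ε t - φ t - ∑ k ∈ Finset.Icc 1 n, ε ^ k • uk k t‖ ≤ C * ε ^ (n + 1) :=
  small_noise_asymptotic_expansion_general S ω hω hScont hSnorm n hn F hF γ hγ T hT u0 M hM ℓ φ u uk
    hφc huc hukc hu hφ hu1 huk hℓM hukM
end
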